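/- Let q be a power of an odd prime and let a = (α_1, …, α_n) be an n-tuple of distinct elements of F_q with n even and k = n/2. If the values η(L_a(α_i)) are all equal for 1 ≤ i ≤ n, then there exists v = (v_1, …, v_n) with each v_i ∈ F_q^* such that GRS_k(a, v) is an MDS self-dual code over F_q of length n, i.e., GRS_k(a,v) equals its Euclidean dual, has dimension n/2, and has minimum Hamming distance n/2 + 1. -/

import Mathlib

/-- The Euclidean dual of a linear code `C ⊆ F^n`. -/
def dualCode {F : Type*} [Field F] {n : ℕ} (C : Submodule F (Fin n → F)) :
    Submodule F (Fin n → F) where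
  carrier := {x | ∀ c ∈ C, ∑ i, x i * c i = 0}
  add_mem' := by
    intro a b ha hb c hc
    simp only [Set.mem_setOf_eq] at ha hb ⊢
    simp [Pi.add_apply, add_mul, Finset.sum_add_distrib, ha c hc, hb c hc]
  zero_mem' := by intro c hc; simp
  smul_mem' := by
    intro r a ha c hc
    simp only [Set.mem_setOf_eq] at ha ⊢
    simp [Pi.smul_apply, smul_eq_mul, mul_assoc, ← Finset.mul_sum, ha c hc]

/-- `C` has minimum Hamming distance `d`. -/
def IsMinDist {F : Type*} [Field F] [DecidableEq F] {n : ℕ}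
    (C : Submodule F (Fin n → F)) (d : ℕ) : Prop :=
  (∀ c ∈ C, c ≠ 0 → d ≤ hammingNorm c) ∧ ∃ c ∈ C, c ≠ 0 ∧ hammingNorm c = d

/-- The generalized Reed–Solomon code `GRS_k(a, v)`:
codewords `(v₁ f(α₁), …, v_n f(α_n))` for `deg f ≤ k − 1`. -/
noncomputable def GRSCode (F : Type*) [Field F] {n : ℕ} (k : ℕ) (a v : Fin n → F) :
    Submodule F (Fin n → F) :=
  (Polynomial.degreeLT F k).map
    (LinearMap.pi fun i => v i • ((Polynomial.aeval (a i)).toLinearMap : Polynomial F →ₗ[F] F))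

/-- The extended generalized Reed–Solomon code `GRS_k(a, v, ∞)` of length `n + 1`:
codewords `(v₁ f(α₁), …, v_n f(α_n), f_{k−1})` for `deg f ≤ k − 1`, where `f_{k−1}`
is the coefficient of `x^{k−1}` in `f`. -/
noncomputable def extGRSCode (F : Type*) [Field F] {n : ℕ} (k : ℕ) (a v : Fin n → F) :
    Submodule F (Fin (n + 1) → F) :=
  (Polynomial.degreeLT F k).map
    (LinearMap.pi fun i : Fin (n + 1) =>
      if h : (i : ℕ) < n then
        v ⟨i, h⟩ • ((Polynomial.aeval (a ⟨i, h⟩)).toLinearMap : Polynomial F →ₗ[F] F)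
      else Polynomial.lcoeff F (k - 1))

open Polynomial Finset in
/-- Key sum: `∑ h(aᵢ)/L(aᵢ) = 0` for `deg h < n - 1`. -/
private lemma grs_key_sum {F : Type*} [Field F] {n : ℕ} (a : Fin n → F)
    (ha : Function.Injective a) (h : F[X]) (hdeg : h.degree < ((n - 1 : ℕ) : WithBot ℕ)) :
    ∑ i, h.eval (a i) * (∏ j ∈ univ.erase i, (a i - a j))⁻¹ = 0 := by
  rcases Nat.eq_zero_or_pos n with rfl | hn
  · simp
  have hinj : Set.InjOn a (univ : Finset (Fin n)) := ha.injOn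
  have hcard : #(univ : Finset (Fin n)) = n := by simp
  have hdeg' : h.degree < (#(univ : Finset (Fin n)) : ℕ) := by
    rw [hcard]
    exact hdeg.trans_le (by exact_mod_cast Nat.sub_le n 1)
  have hI := Lagrange.eq_interpolate hinj hdeg'
  have hc := congrArg (fun p : F[X] => p.coeff (n - 1)) hI
  rw [Polynomial.coeff_eq_zero_of_degree_lt hdeg, Lagrange.interpolate_apply,
    Polynomial.finset_sum_coeff] at hc
  have hterm : ∀ i : Fin n, (C (h.eval (a i)) * Lagrange.basis univ a i).coeff (n - 1)
      = h.eval (a i) * (∏ j ∈ univ.erase i, (a i - a j))⁻¹ := by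
    intro i
    rw [coeff_C_mul]
    congr 1
    have hcarde : #(univ.erase i) = n - 1 := by
      rw [card_erase_of_mem (mem_univ i), hcard]
    have hb := Polynomial.coeff_prod_of_natDegree_le (s := univ.erase i)
      (fun j => Lagrange.basisDivisor (a i) (a j)) 1 (fun j _ => by
        simp only [Lagrange.basisDivisor]
        refine (natDegree_mul_le).trans ?_
        simp [natDegree_X_sub_C])
    rw [hcarde, mul_one] at hb
    rw [Lagrange.basis, hb, ← Finset.prod_inv_distrib]
    refine Finset.prod_congr rfl fun j _ => ?_
    simp only [Lagrange.basisDivisor]; rw [coeff_C_mul]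
    simp [coeff_C]
  rw [Finset.sum_congr rfl fun i _ => hterm i] at hc
  exact hc.symm

open Polynomial Finset in
private lemma grs_card_zeros {F : Type*} [Field F] [DecidableEq F] {n : ℕ} (a : Fin n → F)
    (ha : Function.Injective a) {f : F[X]} (hf : f ≠ 0) :
    #(univ.filter fun i : Fin n => f.eval (a i) = 0) ≤ f.natDegree := by
  classical
  calc #(univ.filter fun i : Fin n => f.eval (a i) = 0)
      ≤ #f.roots.toFinset := by
        refine Finset.card_le_card_of_injOn a (fun i hi => ?_)
          (fun x _ y _ hxy => ha hxy)
        simp only [Finset.mem_coe, Finset.mem_filter] at hi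
        simp [Multiset.mem_toFinset, Polynomial.mem_roots hf, Polynomial.IsRoot, hi.2]
    _ ≤ Multiset.card f.roots := Multiset.toFinset_card_le _
    _ ≤ f.natDegree := f.card_roots'

open Finset in
/-- Lemma 2.1: if all `η(L_a(α_i))` are equal, then some `GRS_{n/2}(a, v)` is an MDS
self-dual code of length `n`. -/
theorem grs_self_dual_criterion
    (q : ℕ) (hq_pp : IsPrimePow q) (hq_odd : Odd q)
    (F : Type*) [Field F] [Fintype F] [DecidableEq F] (hF : Fintype.card F = q)
    (n : ℕ) (hn : Even n) (hn0 : 0 < n)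
    (a : Fin n → F) (ha : Function.Injective a)
    (hη : ∀ i j : Fin n,
      quadraticChar F (∏ m ∈ univ.erase i, (a i - a m)) =
      quadraticChar F (∏ m ∈ univ.erase j, (a j - a m))) :
    ∃ v : Fin n → F, (∀ i, v i ≠ 0) ∧
      dualCode (GRSCode F (n / 2) a v) = GRSCode F (n / 2) a v ∧
      Module.finrank F (GRSCode F (n / 2) a v) = n / 2 ∧
      IsMinDist (GRSCode F (n / 2) a v) (n / 2 + 1) := by
  classical
  obtain ⟨m, hm⟩ := hn
  set k := n / 2 with hk
  have hn2k : n = k + k := by omega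
  have hk1 : 1 ≤ k := by omega
  have hkn : k ≤ n := by omega
  set u : Fin n → F := fun i => ∏ j ∈ univ.erase i, (a i - a j) with hu_def
  have hu : ∀ i, u i ≠ 0 := fun i => Finset.prod_ne_zero_iff.mpr fun j hj =>
    sub_ne_zero.mpr fun h => (Finset.mem_erase.mp hj).1 (ha h).symm
  let i0 : Fin n := ⟨0, hn0⟩
  have hsq : ∀ i, IsSquare (u i * u i0) := by
    intro i
    have h1 : quadraticChar F (u i * u i0) = 1 := by
      rw [map_mul]
      have h2 : quadraticChar F (u i) = quadraticChar F (u i0) := hη i i0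
      rw [h2]
      have := quadraticChar_sq_one (hu i0)
      rwa [pow_two] at this
    exact (quadraticChar_one_iff_isSquare (mul_ne_zero (hu i) (hu i0))).mp h1
  choose s hs using hsq
  have hs0 : ∀ i, s i ≠ 0 := fun i h =>
    (mul_ne_zero (hu i) (hu i0)) (by rw [hs i, h, mul_zero])
  set v : Fin n → F := fun i => s i * (u i)⁻¹ with hv_def
  have hv : ∀ i, v i ≠ 0 := fun i => mul_ne_zero (hs0 i) (inv_ne_zero (hu i))
  have hvv : ∀ i, v i * v i = u i0 * (u i)⁻¹ := by
    intro i
    have h1 : v i * v i = (s i * s i) * ((u i)⁻¹ * (u i)⁻¹) := by rw [hv_def]; ring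
    rw [h1, ← hs i,
      show u i * u i0 * ((u i)⁻¹ * (u i)⁻¹) = u i * (u i)⁻¹ * (u i0 * (u i)⁻¹) from by ring,
      mul_inv_cancel₀ (hu i), one_mul]
  set L : Polynomial F →ₗ[F] (Fin n → F) :=
    LinearMap.pi fun i => v i • ((Polynomial.aeval (a i)).toLinearMap : Polynomial F →ₗ[F] F)
    with hL
  have hLapp : ∀ (f : Polynomial F) (i : Fin n), L f i = v i * f.eval (a i) := by
    intro f i
    simp [hL, LinearMap.pi_apply, Polynomial.coe_aeval_eq_eval, smul_eq_mul]
  have hC : GRSCode F k a v = (Polynomial.degreeLT F k).map L := rfl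
  -- orthogonality
  have horth : ∀ x ∈ GRSCode F k a v, ∀ y ∈ GRSCode F k a v, ∑ i, x i * y i = 0 := by
    intro x hx y hy
    rw [hC, Submodule.mem_map] at hx hy
    obtain ⟨f, hf, rfl⟩ := hx
    obtain ⟨g, hg, rfl⟩ := hy
    rw [Polynomial.mem_degreeLT] at hf hg
    have hdeg : (f * g).degree < ((n - 1 : ℕ) : WithBot ℕ) := by
      rcases eq_or_ne f 0 with rfl | hf0
      · rw [zero_mul, Polynomial.degree_zero]; exact WithBot.bot_lt_coe _
      rcases eq_or_ne g 0 with rfl | hg0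
      · rw [mul_zero, Polynomial.degree_zero]; exact WithBot.bot_lt_coe _
      have h1 : f.natDegree < k := (Polynomial.natDegree_lt_iff_degree_lt hf0).mpr hf
      have h2 : g.natDegree < k := (Polynomial.natDegree_lt_iff_degree_lt hg0).mpr hg
      have hfg : f * g ≠ 0 := mul_ne_zero hf0 hg0
      rw [← Polynomial.natDegree_lt_iff_degree_lt hfg]
      have h3 := Polynomial.natDegree_mul_le (p := f) (q := g)
      omega
    have hsum : ∑ i, (f * g).eval (a i) * (u i)⁻¹ = 0 := grs_key_sum a ha (f * g) hdeg
    calc ∑ i, L f i * L g i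
        = ∑ i, u i0 * ((f * g).eval (a i) * (u i)⁻¹) := by
          refine Finset.sum_congr rfl fun i _ => ?_
          rw [hLapp, hLapp]
          calc v i * f.eval (a i) * (v i * g.eval (a i))
              = (v i * v i) * (f.eval (a i) * g.eval (a i)) := by ring
            _ = u i0 * ((f * g).eval (a i) * (u i)⁻¹) := by
                rw [hvv i, Polynomial.eval_mul]; ring
      _ = u i0 * ∑ i, ((f * g).eval (a i) * (u i)⁻¹) := by rw [Finset.mul_sum]
      _ = 0 := by rw [hsum, mul_zero]
  -- the dot-product bilinear form
  set B : LinearMap.BilinForm F (Fin n → F) :=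
    LinearMap.mk₂ F (fun x y => ∑ i, x i * y i)
      (fun x x' y => by simp [add_mul, Finset.sum_add_distrib])
      (fun c x y => by simp [Finset.mul_sum, mul_assoc])
      (fun x y y' => by simp [mul_add, Finset.sum_add_distrib])
      (fun c x y => by simp [Finset.mul_sum, mul_left_comm]) with hB
  have hBapp : ∀ x y : Fin n → F, B x y = ∑ i, x i * y i := fun x y => rfl
  have hBsymm : ∀ x y : Fin n → F, B x y = B y x := by
    intro x y
    rw [hBapp, hBapp]
    exact Finset.sum_congr rfl fun i _ => mul_comm _ _
  have hBrefl : B.IsRefl := fun x y h => by rw [hBsymm y x]; exact h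
  have hsep : ∀ x : Fin n → F, (∀ y, B x y = 0) → x = 0 := by
    intro x hx
    funext i
    have h1 := hx (Pi.single i 1)
    rw [hBapp] at h1
    simpa [Pi.single_apply, mul_ite, Finset.sum_ite_eq'] using h1
  have hBnd : LinearMap.BilinForm.Nondegenerate B :=
    (LinearMap.IsRefl.nondegenerate_iff_separatingLeft hBrefl).mpr hsep
  have hdualo : dualCode (GRSCode F k a v) = B.orthogonal (GRSCode F k a v) := by
    ext x
    rw [LinearMap.BilinForm.mem_orthogonal_iff]
    constructor
    · intro hx c hc
      show B c x = 0
      rw [hBapp, ← hx c hc]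
      exact Finset.sum_congr rfl fun i _ => mul_comm _ _
    · intro hx c hc
      have h1 : B c x = 0 := hx c hc
      rw [hBapp] at h1
      rw [← h1]
      exact Finset.sum_congr rfl fun i _ => mul_comm _ _
  -- dimension
  haveI : Module.Finite F (Polynomial.degreeLT F k) :=
    Module.Finite.equiv (Polynomial.degreeLTEquiv F k).symm
  have hfinrank_deg : Module.finrank F (Polynomial.degreeLT F k) = k := by
    rw [(Polynomial.degreeLTEquiv F k).finrank_eq, Module.finrank_pi, Fintype.card_fin]
  have hinj : ∀ f ∈ Polynomial.degreeLT F k, L f = 0 → f = 0 := by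
    intro f hf hLf
    by_contra hf0
    have hz : ∀ i, Polynomial.eval (a i) f = 0 := by
      intro i
      have h1 := congrFun hLf i
      rw [hLapp] at h1
      simp only [Pi.zero_apply] at h1
      exact (mul_eq_zero.mp h1).resolve_left (hv i)
    have hcard : #(univ.filter fun i : Fin n => f.eval (a i) = 0) = n := by
      rw [Finset.filter_true_of_mem (fun i _ => hz i), Finset.card_univ, Fintype.card_fin]
    have h1 := grs_card_zeros a ha hf0
    rw [hcard] at h1
    have h2 : f.natDegree < k :=
      (Polynomial.natDegree_lt_iff_degree_lt hf0).mpr (Polynomial.mem_degreeLT.mp hf)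
    omega
  have hrange : GRSCode F k a v
      = LinearMap.range (L ∘ₗ (Polynomial.degreeLT F k).subtype) := by
    rw [hC, LinearMap.range_comp, Submodule.range_subtype]
  have hker : Function.Injective (L ∘ₗ (Polynomial.degreeLT F k).subtype) := by
    rw [← LinearMap.ker_eq_bot, LinearMap.ker_eq_bot']
    rintro ⟨f, hf⟩ h
    exact Subtype.ext (hinj f hf h)
  have hfrC : Module.finrank F (GRSCode F k a v) = k := by
    rw [hrange, LinearMap.finrank_range_of_inj hker]
    exact hfinrank_deg
  have hle : GRSCode F k a v ≤ dualCode (GRSCode F k a v) := by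
    intro x hx
    exact fun c hc => horth x hx c hc
  have hfrD : Module.finrank F (dualCode (GRSCode F k a v)) = k := by
    rw [hdualo, LinearMap.BilinForm.finrank_orthogonal hBnd, hfrC]
    rw [Module.finrank_pi, Fintype.card_fin]
    omega
  have hself : dualCode (GRSCode F k a v) = GRSCode F k a v := by
    haveI : FiniteDimensional F (dualCode (GRSCode F k a v)) :=
      FiniteDimensional.finiteDimensional_submodule _
    refine (Submodule.eq_of_le_of_finrank_le hle ?_).symm
    rw [hfrC, hfrD]
  -- minimum distance, lower bound
  have hlow : ∀ c ∈ GRSCode F k a v, c ≠ 0 → k + 1 ≤ hammingNorm c := by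
    intro c hc hc0
    rw [hC, Submodule.mem_map] at hc
    obtain ⟨f, hf, rfl⟩ := hc
    have hf0 : f ≠ 0 := fun h => hc0 (by rw [h, map_zero])
    have hzero := grs_card_zeros a ha hf0
    have hdf : f.natDegree < k :=
      (Polynomial.natDegree_lt_iff_degree_lt hf0).mpr (Polynomial.mem_degreeLT.mp hf)
    have hnorm : hammingNorm (L f) = #(univ.filter fun i : Fin n => ¬ f.eval (a i) = 0) := by
      refine congrArg Finset.card (Finset.filter_congr fun i _ => ?_)
      rw [hLapp]
      simp [mul_ne_zero_iff, hv i]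
    have hsplit := Finset.card_filter_add_card_filter_not
      (s := (univ : Finset (Fin n))) (p := fun i : Fin n => f.eval (a i) = 0)
    rw [Finset.card_univ, Fintype.card_fin] at hsplit
    omega
  -- minimum distance, attained
  obtain ⟨S, hS_sub, hScard⟩ := Finset.exists_subset_card_eq
    (s := (univ : Finset (Fin n))) (n := k - 1) (by simp; omega)
  set f0 : Polynomial F := ∏ j ∈ S, (Polynomial.X - Polynomial.C (a j)) with hf0_def
  have hf0monic : f0.Monic :=
    Polynomial.monic_prod_of_monic _ _ fun j _ => Polynomial.monic_X_sub_C _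
  have hf0ne : f0 ≠ 0 := hf0monic.ne_zero
  have hf0deg : f0.natDegree = k - 1 := by
    rw [hf0_def, Polynomial.natDegree_prod _ _ fun j _ => Polynomial.X_sub_C_ne_zero _]
    simp [Polynomial.natDegree_X_sub_C, hScard]
  have hf0mem : f0 ∈ Polynomial.degreeLT F k := by
    rw [Polynomial.mem_degreeLT, ← Polynomial.natDegree_lt_iff_degree_lt hf0ne]
    omega
  have heval : ∀ i, f0.eval (a i) = 0 ↔ i ∈ S := by
    intro i
    rw [hf0_def, Polynomial.eval_prod, Finset.prod_eq_zero_iff]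
    simp only [Polynomial.eval_sub, Polynomial.eval_X, Polynomial.eval_C, sub_eq_zero]
    constructor
    · rintro ⟨j, hj, hij⟩; exact (ha hij) ▸ hj
    · intro hi; exact ⟨i, hi, rfl⟩
  have hSne : ∃ i : Fin n, i ∉ S := by
    by_contra hcon
    push_neg at hcon
    have : (univ : Finset (Fin n)) ⊆ S := fun i _ => hcon i
    have := Finset.card_le_card this
    rw [Finset.card_univ, Fintype.card_fin, hScard] at this
    omega
  obtain ⟨iw, hiw⟩ := hSne
  have hLf0ne : L f0 ≠ 0 := by
    intro h
    have h1 := congrFun h iw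
    rw [hLapp] at h1
    simp only [Pi.zero_apply] at h1
    rcases mul_eq_zero.mp h1 with h2 | h2
    · exact hv iw h2
    · exact hiw ((heval iw).mp h2)
  have hnormc : hammingNorm (L f0) = k + 1 := by
    have h1 : hammingNorm (L f0) = #(univ.filter fun i : Fin n => ¬ f0.eval (a i) = 0) := by
      refine congrArg Finset.card (Finset.filter_congr fun i _ => ?_)
      rw [hLapp]
      simp [mul_ne_zero_iff, hv i]
    have hsplit := Finset.card_filter_add_card_filter_not
      (s := (univ : Finset (Fin n))) (p := fun i : Fin n => f0.eval (a i) = 0)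
    rw [Finset.card_univ, Fintype.card_fin] at hsplit
    have h2 : (univ.filter fun i : Fin n => f0.eval (a i) = 0) = S := by
      rw [Finset.filter_congr fun i _ => heval i]
      simp [Finset.filter_mem_eq_inter]
    rw [h2, hScard] at hsplit
    omega
  refine ⟨v, hv, hself, hfrC, hlow, L f0, ?_, hLf0ne, hnormc⟩
  rw [hC]
  exact Submodule.mem_map_of_mem hf0mem
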